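/- Let k be a positive integer, let G be an infinite, locally finite, k-edge-connected graph, and let A be a finite set of vertices of G. Then there exists a finite set S of vertices with A ⊆ S and a collection R of pairwise edge-disjoint rays in G, one for each edge of δ(S), such that each edge of δ(S) is the first edge of the corresponding ray of R. Moreover, if G is 1-ended, all rays of R belong to the unique end of G. -/

import Mathlib

universe u v

/-- A loopless multigraph on vertex type `V` with edge type `E`:
each edge `e` has two distinct endpoints `fst e` and `snd e`. -/
structure Multigraph (V : Type u) (E : Type v) where
  fst : E → V
  snd : E → V
  loopless : ∀ e, fst e ≠ snd e

namespace Multigraph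

variable {V : Type u} {E : Type v}

/-- The edge `e` has endpoints `a` and `b`. -/
def Inc (G : Multigraph V E) (e : E) (a b : V) : Prop :=
  (G.fst e = a ∧ G.snd e = b) ∨ (G.fst e = b ∧ G.snd e = a)

/-- The edge `e` is incident with the vertex `s`. -/
def IncVert (G : Multigraph V E) (s : V) (e : E) : Prop :=
  G.fst e = s ∨ G.snd e = s

/-- The degree of a vertex: the number of edges incident with it. -/
noncomputable def degree (G : Multigraph V E) (s : V) : ℕ :=
  {e : E | G.IncVert s e}.ncard

/-- A graph is locally finite if every vertex is incident with only finitely many edges. -/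
def LocallyFinite (G : Multigraph V E) : Prop :=
  ∀ s : V, {e : E | G.IncVert s e}.Finite

/-- `δ(S)`: the set of edges with exactly one endpoint in `S`. -/
def edgeCut (G : Multigraph V E) (S : Set V) : Set E :=
  {e : E | (G.fst e ∈ S ∧ G.snd e ∉ S) ∨ (G.fst e ∉ S ∧ G.snd e ∈ S)}

open Classical in
/-- The endpoint of `e` other than `s` (for `e` incident with `s`). -/
noncomputable def other (G : Multigraph V E) (s : V) (e : E) : V :=
  if G.fst e = s then G.snd e else G.fst e

open Classical in
/-- For an edge of `δ(S)`, its endpoint outside `S`. -/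
noncomputable def outEnd (G : Multigraph V E) (S : Set V) (e : E) : V :=
  if G.fst e ∈ S then G.snd e else G.fst e

/-- Walks in a multigraph. -/
inductive Walk (G : Multigraph V E) : V → V → Type (max u v)
  | nil (x : V) : Walk G x x
  | cons {x y z : V} (e : E) (h : G.Inc e x y) (p : Walk G y z) : Walk G x z

namespace Walk

variable {G : Multigraph V E}

/-- The list of edges used by a walk. -/
def edges : ∀ {x y : V}, G.Walk x y → List E
  | _, _, .nil _ => []
  | _, _, .cons e _ p => e :: edges p

/-- The list of vertices visited by a walk. -/
def support : ∀ {x y : V}, G.Walk x y → List V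
  | _, y, .nil _ => [y]
  | x, _, .cons _ _ p => x :: support p

/-- A walk is a path if it has no repeated vertices. -/
def IsPath {x y : V} (p : G.Walk x y) : Prop := p.support.Nodup

end Walk

/-- There are `k` pairwise edge-disjoint paths from `x` to `y`. -/
def EdgeDisjointPaths (G : Multigraph V E) (k : ℕ) (x y : V) : Prop :=
  ∃ P : Fin k → G.Walk x y,
    (∀ i, (P i).IsPath) ∧ ∀ i j, i ≠ j → List.Disjoint (P i).edges (P j).edges

/-- `G` is `k`-edge-connected: between any two distinct vertices there are `k`
pairwise edge-disjoint paths. -/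
def EdgeConnected (G : Multigraph V E) (k : ℕ) : Prop :=
  ∀ x y : V, x ≠ y → G.EdgeDisjointPaths k x y

/-- `G` is `(s,k)`-edge-connected: between any two distinct vertices different from `s`
there are `k` pairwise edge-disjoint paths (possibly through `s`). -/
def SEdgeConnected (G : Multigraph V E) (s : V) (k : ℕ) : Prop :=
  ∀ x y : V, x ≠ s → y ≠ s → x ≠ y → G.EdgeDisjointPaths k x y

/-- An orientation of `G` assigns to each edge a tail and a head (its two endpoints). -/
structure Orientation (G : Multigraph V E) where
  tail : E → V
  head : E → V
  inc : ∀ e, G.Inc e (tail e) (head e)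

namespace Orientation

variable {G : Multigraph V E}

/-- Directed walks with respect to an orientation. -/
inductive DiWalk (o : G.Orientation) : V → V → Type (max u v)
  | nil (x : V) : DiWalk o x x
  | cons {x y z : V} (e : E) (ht : o.tail e = x) (hh : o.head e = y) (p : DiWalk o y z) :
      DiWalk o x z

namespace DiWalk

variable {o : G.Orientation}

/-- The list of arcs used by a directed walk. -/
def edges : ∀ {x y : V}, o.DiWalk x y → List E
  | _, _, .nil _ => []
  | _, _, .cons e _ _ p => e :: edges p

/-- The list of vertices visited by a directed walk. -/
def support : ∀ {x y : V}, o.DiWalk x y → List V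
  | _, y, .nil _ => [y]
  | x, _, .cons _ _ _ p => x :: support p

/-- A directed walk is a directed path if it has no repeated vertices. -/
def IsPath {x y : V} (p : o.DiWalk x y) : Prop := p.support.Nodup

end DiWalk

/-- An orientation is `k`-arc-connected if from any vertex to any other there are `k`
pairwise arc-disjoint directed paths. -/
def ArcConnected (o : G.Orientation) (k : ℕ) : Prop :=
  ∀ x y : V, ∃ P : Fin k → o.DiWalk x y,
    (∀ i, (P i).IsPath) ∧ ∀ i j, i ≠ j → List.Disjoint (P i).edges (P j).edges

end Orientation

/-- A ray: a one-way infinite path. -/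
structure Ray (G : Multigraph V E) where
  vert : ℕ → V
  edge : ℕ → E
  inc : ∀ n, G.Inc (edge n) (vert n) (vert (n + 1))
  inj : Function.Injective vert

/-- Two rays are edge-disjoint. -/
def Ray.EdgeDisjoint {G : Multigraph V E} (R R' : G.Ray) : Prop :=
  ∀ m n, R.edge m ≠ R'.edge n

/-- A walk is edge-disjoint from a ray. -/
def Walk.EdgeDisjointRay {G : Multigraph V E} {x y : V} (p : G.Walk x y) (R : G.Ray) : Prop :=
  ∀ e ∈ p.edges, ∀ n, R.edge n ≠ e

/-- Two rays are equivalent (belong to the same end) if there are infinitely many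
pairwise vertex-disjoint paths between them. -/
def RayEquiv (G : Multigraph V E) (R R' : G.Ray) : Prop :=
  ∃ P : ℕ → (Σ (m n : ℕ), G.Walk (R.vert m) (R'.vert n)),
    (∀ i, (P i).2.2.IsPath) ∧
      ∀ i j, i ≠ j → List.Disjoint (P i).2.2.support (P j).2.2.support

/-- A graph is one-ended if it has a ray and any two rays are equivalent. -/
def OneEnded (G : Multigraph V E) : Prop :=
  Nonempty G.Ray ∧ ∀ R R' : G.Ray, G.RayEquiv R R'

end Multigraph

/-!
Take `S ⊇ A ∪ {x₀}` finite with `|δ(S)|` minimal among finite supersets; `δ(S)` is nonempty by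
connectivity. For every `n`, each vertex set between `S` and the ball of radius `n` around `S` has
a cut at least as large as `δ(S)`, so Menger's theorem (in its augmenting-path form) gives
`|δ(S)|` edge-disjoint walks from `S` out of that ball. Shortened to paths and cut at a crossing
of `δ(S)`, they become edge-disjoint paths of length greater than `n` that start with distinct,
hence with all, edges of `δ(S)`. By local finiteness these fans converge along an ultrafilter to
edge-disjoint rays, one starting with each edge of `δ(S)`. In a one-ended graph any two rays are
equivalent, so the last claim is immediate.
-/

theorem List.exists_eq_append_cons_of_last {α : Type*} {p : α → Prop} {l : List α}
    (h : ∃ x ∈ l, p x) : ∃ l₁ x l₂, l = l₁ ++ x :: l₂ ∧ p x ∧ ∀ y ∈ l₂, ¬ p y := by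
  classical
  obtain ⟨x, hx⟩ : ∃ x, l.reverse.find? (fun x => decide (p x)) = some x :=
    Option.isSome_iff_exists.1 (List.find?_isSome.2 (by simpa using h))
  obtain ⟨hpx, l₂, l₁, hrev, hl₂⟩ := List.find?_eq_some_iff_append.1 hx
  refine ⟨l₁.reverse, x, l₂.reverse, ?_, by simpa using hpx, fun y hy => ?_⟩
  · simpa using congrArg List.reverse hrev
  · simpa using hl₂ y (List.mem_reverse.1 hy)

theorem List.nodup_map_of_nodup_flatMap {α β : Type*} {l : List α} {f : α → List β} {g : α → β}
    (h : (l.flatMap f).Nodup) (hg : ∀ x ∈ l, g x ∈ f x) : (l.map g).Nodup := by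
  induction l with
  | nil => simp
  | cons x l ih =>
    rw [List.flatMap_cons, List.nodup_append] at h
    refine List.nodup_cons.2 ⟨fun hx => ?_, ih h.2.1 fun y hy => hg y (List.mem_cons_of_mem _ hy)⟩
    obtain ⟨y, hy, hxy⟩ := List.mem_map.1 hx
    exact h.2.2 _ (hg x List.mem_cons_self) _
      (List.mem_flatMap.2 ⟨y, hy, hg y (List.mem_cons_of_mem _ hy)⟩) hxy.symm

theorem Ultrafilter.exists_eventually_eq {α β : Type*} (U : Ultrafilter α) {f : α → β}
    {s : Set β} (hs : s.Finite) (h : ∀ᶠ a in (U : Filter α), f a ∈ s) :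
    ∃ b, ∀ᶠ a in (U : Filter α), f a = b := by
  obtain ⟨b, -, hb⟩ := Ultrafilter.eq_pure_of_finite_mem hs (Ultrafilter.mem_map.2 h)
  exact ⟨b, Ultrafilter.mem_map.1 (hb ▸ Ultrafilter.mem_pure.2 rfl : {b} ∈ U.map f)⟩

namespace Multigraph

open Classical Filter

variable {V : Type u} {E : Type v} {G : Multigraph V E}

/-- A step `(e, x, y)` traverses the edge `e` from `x` to `y`. Walks are handled as lists of
steps, which records the direction in which each edge is used. -/
abbrev Step (V : Type u) (E : Type v) := E × V × V

inductive IsWalk (G : Multigraph V E) : V → List (Step V E) → V → Prop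
  | nil (a : V) : IsWalk G a [] a
  | cons {e : E} {x y b : V} {l : List (Step V E)} (h : G.Inc e x y) (hl : IsWalk G y l b) :
      IsWalk G x ((e, x, y) :: l) b

def verts (a : V) (l : List (Step V E)) : List V := a :: l.map (·.2.2)

theorem Inc.symm {e : E} {x y : V} (h : G.Inc e x y) : G.Inc e y x := h.elim Or.inr Or.inl

theorem Inc.eq_or_eq {e : E} {x y u w : V} (h : G.Inc e x y) (h' : G.Inc e u w) :
    x = u ∨ x = w := by
  rcases h with ⟨rfl, rfl⟩ | ⟨rfl, rfl⟩ <;> rcases h' with ⟨h1, h2⟩ | ⟨h1, h2⟩ <;> tauto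

theorem Inc.mem_edgeCut_iff {X : Set V} {e : E} {x y : V} (h : G.Inc e x y) :
    e ∈ G.edgeCut X ↔ (x ∈ X ∧ y ∉ X) ∨ (x ∉ X ∧ y ∈ X) := by
  rcases h with ⟨rfl, rfl⟩ | ⟨rfl, rfl⟩ <;> simp only [edgeCut, Set.mem_ofPred_eq]; tauto

theorem Walk.exists_isWalk {x y : V} (p : G.Walk x y) : ∃ l, G.IsWalk x l y := by
  induction p with
  | nil x => exact ⟨[], .nil x⟩
  | cons e h p ih =>
    obtain ⟨l, hl⟩ := ih
    exact ⟨_, .cons h hl⟩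

namespace IsWalk

variable {a b c x y : V} {e : E} {l l₁ l₂ : List (Step V E)}

theorem append (h₁ : G.IsWalk a l₁ b) (h₂ : G.IsWalk b l₂ c) : G.IsWalk a (l₁ ++ l₂) c := by
  induction h₁ with
  | nil => exact h₂
  | cons h _ ih => exact .cons h (ih h₂)

theorem of_append (h : G.IsWalk a (l₁ ++ l₂) c) : ∃ b, G.IsWalk a l₁ b ∧ G.IsWalk b l₂ c := by
  induction l₁ generalizing a with
  | nil => exact ⟨a, .nil a, h⟩
  | cons s t ih =>
    cases h with
    | cons h hl =>
      obtain ⟨b, hb₁, hb₂⟩ := ih hl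
      exact ⟨b, .cons h hb₁, hb₂⟩

theorem of_cons (h : G.IsWalk c ((e, x, y) :: l) b) : c = x ∧ G.Inc e x y ∧ G.IsWalk y l b := by
  cases h with
  | cons h hl => exact ⟨rfl, h, hl⟩

theorem of_append_cons (h : G.IsWalk a (l₁ ++ (e, x, y) :: l₂) b) :
    G.IsWalk a l₁ x ∧ G.Inc e x y ∧ G.IsWalk y l₂ b := by
  obtain ⟨c, h₁, h₂⟩ := h.of_append
  obtain ⟨rfl, hinc, h₂⟩ := h₂.of_cons
  exact ⟨h₁, hinc, h₂⟩

theorem inc_of_mem (h : G.IsWalk a l b) {s : Step V E} (hs : s ∈ l) : G.Inc s.1 s.2.1 s.2.2 := by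
  induction h with
  | nil => simp at hs
  | cons h _ ih =>
    rcases List.mem_cons.1 hs with rfl | hs
    · exact h
    · exact ih hs

theorem map_src_append (h : G.IsWalk a l b) : l.map (·.2.1) ++ [b] = verts a l := by
  induction h with
  | nil => rfl
  | cons _ _ ih => simp_all [verts]

theorem mem_verts (h : G.IsWalk a l b) : b ∈ verts a l := by
  simp [← h.map_src_append]

theorem nodup_map_src (h : G.IsWalk a l b) (hnd : (verts a l).Nodup) :
    (l.map (·.2.1)).Nodup :=
  (h.map_src_append ▸ hnd).sublist (List.sublist_append_left _ _)

theorem verts_suffix (h : G.IsWalk a l₁ x) : verts x l₂ <:+ verts a (l₁ ++ l₂) := by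
  induction h with
  | nil => exact List.suffix_refl _
  | cons _ _ ih => exact ih.trans (List.suffix_cons _ _)

theorem exists_suffix_of_mem_verts (h : G.IsWalk a l b) (hx : x ∈ verts a l) :
    ∃ l', l' <:+ l ∧ G.IsWalk x l' b ∧ verts x l' <:+ verts a l := by
  induction h with
  | nil =>
    obtain rfl : x = _ := by simpa [verts] using hx
    exact ⟨[], List.suffix_refl _, .nil x, List.suffix_refl _⟩
  | @cons e z w b l hinc hl ih =>
    by_cases hxz : x = z
    · subst hxz
      exact ⟨_, List.suffix_refl _, .cons hinc hl, List.suffix_refl _⟩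
    · have hx' : x ∈ verts w l := by simp_all [verts]
      obtain ⟨l', hsuf, hwl, hvsuf⟩ := ih hx'
      exact ⟨l', hsuf.trans (List.suffix_cons _ _), hwl, hvsuf.trans (List.suffix_cons _ _)⟩

theorem exists_sublist_nodup_verts (h : G.IsWalk a l b) :
    ∃ l', l'.Sublist l ∧ G.IsWalk a l' b ∧ (verts a l').Nodup := by
  induction h with
  | nil => exact ⟨[], by simp, .nil _, by simp [verts]⟩
  | @cons e x y b l hinc hl ih =>
    obtain ⟨l', hsub, hwl, hnd⟩ := ih
    by_cases hx : x ∈ verts y l'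
    · obtain ⟨l'', hsuf, hwl', hvsuf⟩ := hwl.exists_suffix_of_mem_verts hx
      exact ⟨l'', (hsuf.sublist.trans hsub).trans (List.sublist_cons_self _ _), hwl',
        hnd.sublist hvsuf.sublist⟩
    · refine ⟨(e, x, y) :: l', hsub.cons_cons _, .cons hinc hwl, ?_⟩
      simp_all [verts]

theorem nodup_map_edge (h : G.IsWalk a l b) (hnd : (verts a l).Nodup) :
    (l.map Prod.fst).Nodup := by
  induction h with
  | nil => simp
  | @cons e x y b l hinc hl ih =>
    have hx : x ∉ verts y l := (List.nodup_cons.1 hnd).1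
    refine List.nodup_cons.2 ⟨fun hmem => ?_, ih (List.nodup_cons.1 hnd).2⟩
    obtain ⟨t, ht, rfl⟩ := List.mem_map.1 hmem
    rcases hinc.eq_or_eq (hl.inc_of_mem ht) with rfl | rfl
    · exact hx (hl.map_src_append ▸ List.mem_append_left _ (List.mem_map_of_mem ht))
    · exact hx (List.mem_cons_of_mem _ (List.mem_map_of_mem ht))

theorem exists_crossing {X : Set V} (h : G.IsWalk a l b) (ha : a ∈ X) (hb : b ∉ X) :
    ∃ l₁ e x y l₂, l = l₁ ++ (e, x, y) :: l₂ ∧ x ∈ X ∧ y ∉ X := by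
  induction h with
  | nil => exact absurd ha hb
  | @cons e x y c l hinc hl ih =>
    by_cases hy : y ∈ X
    · obtain ⟨l₁, e', x', y', l₂, rfl, hx', hy'⟩ := ih hy hb
      exact ⟨(e, x, y) :: l₁, e', x', y', l₂, rfl, hx', hy'⟩
    · exact ⟨[], e, x, y, l, rfl, ha, hy⟩

theorem forall_notMem {X : Set V} (h : G.IsWalk a l b) (ha : a ∉ X)
    (hin : ∀ s ∈ l, s.2.2 ∈ X → s.2.1 ∈ X) : ∀ s ∈ l, s.2.1 ∉ X ∧ s.2.2 ∉ X := by
  induction h with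
  | nil => simp
  | @cons e x y c l hinc hl ih =>
    have hy : y ∉ X := fun hy => ha (hin _ List.mem_cons_self hy)
    intro s hs
    rcases List.mem_cons.1 hs with rfl | hs
    · exact ⟨ha, hy⟩
    · exact ih hy (fun t ht => hin t (List.mem_cons_of_mem _ ht)) s hs

theorem countP_mem_edgeCut_le_one {X : Set V} (h : G.IsWalk a l b) (ha : a ∈ X)
    (hin : ∀ s ∈ l, s.2.2 ∈ X → s.2.1 ∈ X) :
    l.countP (fun s => s.1 ∈ G.edgeCut X) ≤ 1 := by
  induction h with
  | nil => simp
  | @cons e x y c l hinc hl ih =>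
    have hin' : ∀ s ∈ l, s.2.2 ∈ X → s.2.1 ∈ X := fun s hs => hin s (List.mem_cons_of_mem _ hs)
    by_cases hy : y ∈ X
    · have he : e ∉ G.edgeCut X := by rw [hinc.mem_edgeCut_iff]; tauto
      simpa [he] using ih hy hin'
    · have hout : ∀ s ∈ l, s.1 ∉ G.edgeCut X := fun s hs => by
        rw [(hl.inc_of_mem hs).mem_edgeCut_iff]
        have := hl.forall_notMem hy hin' s hs
        tauto
      have hzero : l.countP (fun s => decide (s.1 ∈ G.edgeCut X)) = 0 :=
        List.countP_eq_zero.2 fun s hs => by simpa using hout s hs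
      rw [List.countP_cons, hzero]
      split_ifs <;> simp

theorem src_eq_of_getElem? (h : G.IsWalk a l b) {i : ℕ} {s t : Step V E} (hs : l[i]? = some s)
    (ht : l[i + 1]? = some t) : t.2.1 = s.2.2 := by
  induction h generalizing i with
  | nil => simp at hs
  | @cons e x y c l hinc hl ih =>
    cases i with
    | zero =>
      obtain rfl : (e, x, y) = s := by simpa using hs
      cases hl with
      | nil => simp at ht
      | cons => obtain rfl := Option.some.inj ht; rfl
    | succ i => exact ih (by simpa using hs) (by simpa using ht)

theorem eq_of_getElem?_src_eq (h : G.IsWalk a l b) (hnd : (verts a l).Nodup) {i j : ℕ}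
    {s t : Step V E} (hs : l[i]? = some s) (ht : l[j]? = some t) (hst : s.2.1 = t.2.1) :
    i = j := by
  have hi : i < (l.map (·.2.1)).length := by simpa using (List.getElem?_eq_some_iff.1 hs).1
  refine (List.getElem?_inj hi (h.nodup_map_src hnd)).1 ?_
  simp [List.getElem?_map, hs, ht, hst]

theorem take (h : G.IsWalk a l b) (k : ℕ) :
    ∃ c, G.IsWalk a (l.take k) c :=
  (IsWalk.of_append (by rwa [List.take_append_drop] : G.IsWalk a (l.take k ++ l.drop k) b)).imp
    fun _ hc => hc.1

end IsWalk

theorem edgeCut_finite (hlf : G.LocallyFinite) {X : Set V} (hX : X.Finite) :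
    (G.edgeCut X).Finite := by
  refine (hX.biUnion fun v _ => hlf v).subset ?_
  rintro e (⟨h1, -⟩ | ⟨-, h2⟩)
  · exact Set.mem_biUnion h1 (Or.inl rfl)
  · exact Set.mem_biUnion h2 (Or.inr rfl)

theorem other_eq {e : E} {x y : V} (h : G.Inc e x y) : G.other x e = y := by
  rcases h with ⟨h1, h2⟩ | ⟨h1, h2⟩
  · rw [other, if_pos h1, h2]
  · have hne : G.fst e ≠ x := fun hc => G.loopless e (by rw [hc, h2])
    rw [other, if_neg hne, h1]

theorem finite_setOf_step (hlf : G.LocallyFinite) {W : Set V} (hW : W.Finite) :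
    {s : Step V E | s.2.1 ∈ W ∧ G.Inc s.1 s.2.1 s.2.2}.Finite := by
  refine (hW.biUnion fun x _ => (hlf x).image fun e => ((e, x, G.other x e) : Step V E)).subset ?_
  rintro ⟨e, x, y⟩ ⟨hx, hinc⟩
  refine Set.mem_biUnion hx ⟨e, ?_, by simp [other_eq hinc]⟩
  rcases hinc with ⟨h, -⟩ | ⟨-, h⟩
  · exact Or.inl h
  · exact Or.inr h

theorem finite_setOf_isWalk (hlf : G.LocallyFinite) (L : ℕ) {W : Set V} (hW : W.Finite) :
    {l : List (Step V E) | l.length ≤ L ∧ ∃ a ∈ W, ∃ b, G.IsWalk a l b}.Finite := by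
  induction L generalizing W with
  | zero =>
    refine (Set.finite_singleton []).subset ?_
    rintro l ⟨hlen, -⟩
    simpa using hlen
  | succ L ih =>
    have hsteps := finite_setOf_step hlf hW (G := G)
    refine ((Set.finite_singleton []).union ((hsteps.prod (ih (hW.union (hsteps.image
      (·.2.2))))).image fun p => p.1 :: p.2)).subset ?_
    rintro (_ | ⟨⟨e, x, y⟩, l⟩) ⟨hlen, a, ha, b, hwl⟩
    · exact Or.inl rfl
    · obtain ⟨rfl, hinc, hl⟩ := hwl.of_cons
      refine Or.inr ⟨((e, a, y), l), ⟨⟨ha, hinc⟩, ?_, y, ?_, b, hl⟩, rfl⟩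
      · simpa using hlen
      · exact Or.inr ⟨(e, a, y), ⟨ha, hinc⟩, rfl⟩

def ball (G : Multigraph V E) (S : Set V) (n : ℕ) : Set V :=
  {v | ∃ a ∈ S, ∃ l, G.IsWalk a l v ∧ l.length ≤ n}

theorem subset_ball (S : Set V) (n : ℕ) : S ⊆ G.ball S n :=
  fun a ha => ⟨a, ha, [], .nil a, by simp⟩

theorem ball_finite (hlf : G.LocallyFinite) {S : Set V} (hS : S.Finite) (n : ℕ) :
    (G.ball S n).Finite := by
  refine (hS.union ((finite_setOf_isWalk hlf n hS).biUnion fun l _ =>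
    l.finite_toSet.image (·.2.2))).subset ?_
  rintro v ⟨a, ha, l, hwl, hlen⟩
  rcases List.mem_cons.1 hwl.mem_verts with rfl | hv
  · exact Or.inl ha
  · obtain ⟨s, hs, rfl⟩ := List.mem_map.1 hv
    exact Or.inr (Set.mem_biUnion ⟨hlen, a, ha, _, hwl⟩ ⟨s, hs, rfl⟩)

theorem IsWalk.exists_exit_path {S : Set V} {n : ℕ} {a b : V} {l : List (Step V E)}
    (h : G.IsWalk a l b) (ha : a ∈ S) (hb : b ∉ G.ball S n) :
    ∃ p e, p.Sublist l ∧ e ∈ G.edgeCut S ∧ p[0]?.map Prod.fst = some e ∧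
      ∃ x ∈ S, G.IsWalk x p b ∧ (verts x p).Nodup ∧ n < p.length := by
  obtain ⟨l', hsub, hw, hnd⟩ := h.exists_sublist_nodup_verts
  obtain ⟨C, e, x, y, D, rfl, hx, hy⟩ := hw.exists_crossing ha fun hbS => hb (subset_ball S n hbS)
  obtain ⟨hC, hinc, hD⟩ := hw.of_append_cons
  refine ⟨(e, x, y) :: D, e, (List.sublist_append_right _ _).trans hsub,
    hinc.mem_edgeCut_iff.2 (Or.inl ⟨hx, hy⟩), rfl, x, hx, .cons hinc hD,
    hnd.sublist hC.verts_suffix.sublist, ?_⟩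
  by_contra hlen
  exact hb ⟨x, hx, _, .cons hinc hD, not_lt.1 hlen⟩

structure EscapeWalk (G : Multigraph V E) (S T : Set V) where
  start : V
  steps : List (Step V E)
  finish : V
  isWalk : G.IsWalk start steps finish
  start_mem : start ∈ S
  finish_not_mem : finish ∉ T

/-- `nodup` says at once that the walks are pairwise edge-disjoint and that none of them repeats
an edge. -/
structure WalkSystem (G : Multigraph V E) (S T : Set V) where
  walks : List (G.EscapeWalk S T)
  nodup : ((walks.flatMap EscapeWalk.steps).map Prod.fst).Nodup

namespace WalkSystem

variable {S T : Set V} (P : G.WalkSystem S T)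

def steps : List (Step V E) := P.walks.flatMap EscapeWalk.steps

def Used (e : E) : Prop := e ∈ P.steps.map Prod.fst

/-- Residual walks of the augmenting-path argument. -/
def Residual (w : List (Step V E)) : Prop :=
  ∀ s ∈ w, ¬ P.Used s.1 ∨ (s.1, s.2.2, s.2.1) ∈ P.steps

def reach : Set V := {v | ∃ a ∈ S, ∃ w, G.IsWalk a w v ∧ P.Residual w}

def cons (W : G.EscapeWalk S T) (hnd : (W.steps.map Prod.fst).Nodup)
    (hfree : ∀ s ∈ W.steps, ¬ P.Used s.1) : G.WalkSystem S T where
  walks := W :: P.walks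
  nodup := by
    rw [List.flatMap_cons, List.map_append]
    refine hnd.append P.nodup fun e he he' => ?_
    obtain ⟨s, hs, rfl⟩ := List.mem_map.1 he
    exact hfree s hs he'

variable {P}

theorem mem_steps {W : G.EscapeWalk S T} (hW : W ∈ P.walks) {s : Step V E} (hs : s ∈ W.steps) :
    s ∈ P.steps :=
  List.mem_flatMap.2 ⟨W, hW, hs⟩

theorem disjoint_of_ne {W W' : G.EscapeWalk S T} (hW : W ∈ P.walks) (hW' : W' ∈ P.walks)
    (hne : W ≠ W') : (W.steps.map Prod.fst).Disjoint (W'.steps.map Prod.fst) := by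
  have hnd := P.nodup
  rw [List.map_flatMap, List.nodup_flatMap] at hnd
  have : Std.Symm (Function.onFun List.Disjoint fun W : G.EscapeWalk S T => W.steps.map Prod.fst) :=
    ⟨fun _ _ h => List.disjoint_comm.1 h⟩
  exact hnd.2.forall hW hW' hne

theorem Residual.sublist {w w' : List (Step V E)} (h : P.Residual w) (hw : w'.Sublist w) :
    P.Residual w' :=
  fun s hs => h s (hw.subset hs)

theorem subset_reach : S ⊆ P.reach :=
  fun a ha => ⟨a, ha, [], .nil a, by simp [Residual]⟩

theorem src_mem_reach {s : Step V E} (hs : s ∈ P.steps) (h : s.2.2 ∈ P.reach) :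
    s.2.1 ∈ P.reach := by
  obtain ⟨W, hW, hsW⟩ := List.mem_flatMap.1 hs
  obtain ⟨a, ha, w, hw, hres⟩ := h
  refine ⟨a, ha, w ++ [(s.1, s.2.2, s.2.1)],
    hw.append (.cons (W.isWalk.inc_of_mem hsW).symm (.nil _)), fun t ht => ?_⟩
  rcases List.mem_append.1 ht with ht | ht
  · exact hres t ht
  · obtain rfl := List.mem_singleton.1 ht
    exact Or.inr hs

theorem used_of_mem_edgeCut_reach {e : E} (he : e ∈ G.edgeCut P.reach) : P.Used e := by
  by_contra hfree
  obtain ⟨x, y, hinc, hx, hy⟩ : ∃ x y, G.Inc e x y ∧ x ∈ P.reach ∧ y ∉ P.reach := by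
    rcases he with ⟨h1, h2⟩ | ⟨h1, h2⟩
    · exact ⟨_, _, Or.inl ⟨rfl, rfl⟩, h1, h2⟩
    · exact ⟨_, _, Or.inr ⟨rfl, rfl⟩, h2, h1⟩
  obtain ⟨a, ha, w, hw, hres⟩ := hx
  refine hy ⟨a, ha, w ++ [(e, x, y)], hw.append (.cons hinc (.nil y)), fun t ht => ?_⟩
  rcases List.mem_append.1 ht with ht | ht
  · exact hres t ht
  · obtain rfl := List.mem_singleton.1 ht
    exact Or.inl hfree

/-- Every edge of `δ(reach)` is used by the system, and each walk of the system crosses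
`δ(reach)` at most once. -/
theorem ncard_edgeCut_reach_le : (G.edgeCut P.reach).ncard ≤ P.walks.length := by
  let cutSteps := P.steps.filter fun s => s.1 ∈ G.edgeCut P.reach
  have hsub : G.edgeCut P.reach ⊆ ↑(cutSteps.map Prod.fst).toFinset := fun e he => by
    obtain ⟨s, hs, rfl⟩ := List.mem_map.1 (used_of_mem_edgeCut_reach he)
    exact Finset.mem_coe.2 (List.mem_toFinset.2
      (List.mem_map_of_mem (List.mem_filter.2 ⟨hs, decide_eq_true he⟩)))
  have hcount : ∀ W ∈ P.walks, W.steps.countP (fun s => s.1 ∈ G.edgeCut P.reach) ≤ 1 :=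
    fun W hW => W.isWalk.countP_mem_edgeCut_le_one (subset_reach W.start_mem)
      fun s hs => src_mem_reach (mem_steps hW hs)
  calc (G.edgeCut P.reach).ncard
      ≤ (cutSteps.map Prod.fst).toFinset.card :=
        (Set.ncard_le_ncard hsub (Finset.finite_toSet _)).trans (Set.ncard_coe_finset _).le
    _ ≤ cutSteps.length := (List.toFinset_card_le _).trans (List.length_map _).le
    _ = (P.walks.map fun W => W.steps.countP (fun s => s.1 ∈ G.edgeCut P.reach)).sum := by
        rw [← List.countP_eq_length_filter, steps, List.countP_flatMap]; rfl
    _ ≤ P.walks.length := by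
        have := List.sum_le_card_nsmul _ 1 fun n hn => by
          obtain ⟨W, hW, rfl⟩ := List.mem_map.1 hn
          exact hcount W hW
        simpa only [List.length_map, smul_eq_mul, mul_one] using this

/-- Replacing the walk `A ++ r :: B` of the system by `A ++ D`, where `D` avoids the system. -/
theorem exists_reroute {W : G.EscapeWalk S T} (hW : W ∈ P.walks) {A B D : List (Step V E)}
    {r : Step V E} (hWs : W.steps = A ++ r :: B) {v : V} (hD : G.IsWalk r.2.1 D v) (hv : v ∉ T)
    (hDnd : (D.map Prod.fst).Nodup) (hDfree : ∀ t ∈ D, ¬ P.Used t.1) :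
    ∃ P' : G.WalkSystem S T, P'.walks.length = P.walks.length ∧
      (∀ e, P'.Used e → P.Used e ∨ e ∈ D.map Prod.fst) ∧
      (∀ t ∈ P.steps, t ∈ P'.steps ∨ t = r ∨ t ∈ B) ∧
      ∀ t ∈ B, ¬ P'.Used t.1 := by
  obtain ⟨e, y, x⟩ := r
  obtain ⟨R, hR⟩ : ∃ R, (P.walks.erase W).flatMap EscapeWalk.steps = R := ⟨_, rfl⟩
  have hperm : P.steps.Perm (A ++ (e, y, x) :: B ++ R) := by
    simpa [steps, hWs, hR] using (List.perm_cons_erase hW).flatMap_right EscapeWalk.steps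
  have hnd : ((A ++ (e, y, x) :: B ++ R).map Prod.fst).Nodup :=
    (hperm.map Prod.fst).nodup_iff.1 P.nodup
  have hused : ∀ t ∈ A ++ (e, y, x) :: B ++ R, P.Used t.1 :=
    fun t ht => List.mem_map_of_mem (hperm.mem_iff.2 ht)
  have hA : G.IsWalk W.start A y := (hWs ▸ W.isWalk).of_append_cons.1
  let W' : G.EscapeWalk S T := ⟨W.start, A ++ D, v, hA.append hD, W.start_mem, hv⟩
  have hnd' : ((W'.steps ++ R).map Prod.fst).Nodup := by
    have hAR : ((A ++ R).map Prod.fst).Nodup := hnd.sublist (by simp)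
    have hARD : ((A ++ R ++ D).map Prod.fst).Nodup := by
      rw [List.map_append]
      refine hAR.append hDnd fun f hf hf' => ?_
      obtain ⟨t, ht, rfl⟩ := List.mem_map.1 hf
      obtain ⟨t', ht', hfst⟩ := List.mem_map.1 hf'
      exact hDfree t' ht' (hfst ▸ hused t (by simp at ht ⊢; tauto))
    refine (List.Perm.map Prod.fst ?_).nodup_iff.1 hARD
    simpa [W'] using List.perm_append_comm.append_left A
  let P' : G.WalkSystem S T := ⟨W' :: P.walks.erase W, by
    rw [List.flatMap_cons, hR]; exact hnd'⟩
  have hsteps' : P'.steps = A ++ D ++ R := by simp [P', steps, W', hR]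
  refine ⟨P', by simpa [P'] using (List.perm_cons_erase hW).length_eq.symm,
    fun f hf => ?_, fun t ht => ?_, fun t ht hf => ?_⟩
  · rw [Used, hsteps', List.map_append, List.map_append] at hf
    obtain (hf | hf) | hf := List.mem_append.1 hf |>.imp_left List.mem_append.1
    · obtain ⟨t, ht, rfl⟩ := List.mem_map.1 hf
      exact Or.inl (hused t (by simp [ht]))
    · exact Or.inr hf
    · obtain ⟨t, ht, rfl⟩ := List.mem_map.1 hf
      exact Or.inl (hused t (by simp [ht]))
  · have := hperm.mem_iff.1 ht
    rw [hsteps']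
    simp only [List.mem_append, List.mem_cons] at this ⊢
    tauto
  · obtain ⟨t', ht', hft⟩ := List.mem_map.1 (hsteps' ▸ hf : t.1 ∈ (A ++ D ++ R).map Prod.fst)
    by_cases htD : t' ∈ D
    · exact hDfree t' htD (hft ▸ hused t (by simp [ht]))
    · simp [List.nodup_append] at hnd
      grind

/-- Reroute the system at the last step of `w` that traverses one of its edges backwards. -/
theorem exists_exchange {a v : V} {w : List (Step V E)} (hw : G.IsWalk a w v)
    (hv : v ∉ T) (hnd : (verts a w).Nodup) (hres : P.Residual w) (hused : ∃ s ∈ w, P.Used s.1) :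
    ∃ P' : G.WalkSystem S T, P'.walks.length = P.walks.length ∧
      ∃ w' v', G.IsWalk a w' v' ∧ v' ∉ T ∧ (verts a w').Nodup ∧ P'.Residual w' ∧
        w'.countP (fun s => P'.Used s.1) < w.countP (fun s => P.Used s.1) := by
  obtain ⟨C, ⟨e, x, y⟩, D, rfl, hsUsed, hDfree⟩ := List.exists_eq_append_cons_of_last hused
  obtain ⟨hC, -, hD⟩ := hw.of_append_cons
  have hwnd := hw.nodup_map_edge hnd
  simp only [List.map_append, List.map_cons, List.nodup_append, List.nodup_cons] at hwnd
  have hrev : (e, y, x) ∈ P.steps := (hres _ (by simp)).resolve_left (not_not.2 hsUsed)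
  obtain ⟨W, hW, hrW⟩ := List.mem_flatMap.1 hrev
  obtain ⟨A, B, hWs⟩ := List.append_of_mem hrW
  obtain ⟨P', hlen, hused', hsteps', hBfree⟩ :=
    exists_reroute hW hWs hD hv hwnd.2.1.2 hDfree
  have hB : G.IsWalk x B W.finish := (hWs ▸ W.isWalk).of_append_cons.2.2
  have hCused : ∀ t ∈ C, P'.Used t.1 → P.Used t.1 := fun t ht ht' =>
    (hused' _ ht').resolve_right fun htD => hwnd.2.2 _ (List.mem_map_of_mem ht) _
      (List.mem_cons_of_mem _ htD) rfl
  have hres' : P'.Residual (C ++ B) := by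
    intro t ht
    rcases List.mem_append.1 ht with ht | ht
    · rcases hres t (by simp [ht]) with hfree | hrevt
      · exact Or.inl (mt (hCused t ht) hfree)
      · rcases hsteps' _ hrevt with h | h | h
        · exact Or.inr h
        · exact absurd (congrArg Prod.fst h)
            (hwnd.2.2 _ (List.mem_map_of_mem ht) _ List.mem_cons_self)
        · exact Or.inl (hBfree (t.1, t.2.2, t.2.1) h)
    · exact Or.inl (hBfree t ht)
  have hBzero : B.countP (fun s => P'.Used s.1) = 0 :=
    List.countP_eq_zero.2 fun t ht => by simpa using hBfree t ht
  have hDzero : D.countP (fun s => P.Used s.1) = 0 :=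
    List.countP_eq_zero.2 fun t ht => by simpa using hDfree t ht
  obtain ⟨w', hsub, hw', hnd'⟩ := (hC.append hB).exists_sublist_nodup_verts
  refine ⟨P', hlen, w', W.finish, hw', W.finish_not_mem, hnd', hres'.sublist hsub, ?_⟩
  calc w'.countP (fun s => P'.Used s.1)
      ≤ (C ++ B).countP (fun s => P'.Used s.1) := hsub.countP_le
    _ = C.countP (fun s => P'.Used s.1) := by rw [List.countP_append, hBzero, add_zero]
    _ ≤ C.countP (fun s => P.Used s.1) :=
        List.countP_mono_left fun t ht h => by simpa using hCused t ht (by simpa using h)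
    _ < (C ++ (e, x, y) :: D).countP (fun s => P.Used s.1) := by
        simp [List.countP_append, hsUsed, hDzero]

theorem exists_length_eq_succ {a v : V} {w : List (Step V E)} (hw : G.IsWalk a w v) (ha : a ∈ S)
    (hv : v ∉ T) (hnd : (verts a w).Nodup) (hres : P.Residual w) :
    ∃ P' : G.WalkSystem S T, P'.walks.length = P.walks.length + 1 := by
  induction hn : w.countP (fun s => P.Used s.1) using Nat.strong_induction_on
    generalizing P v w with
  | _ n ih =>
  by_cases hused : ∃ s ∈ w, P.Used s.1
  · obtain ⟨P', hlen, w', v', hw', hv', hnd', hres', hlt⟩ :=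
      exists_exchange hw hv hnd hres hused
    rw [← hlen]
    exact ih _ (hn ▸ hlt) hw' hv' hnd' hres' rfl
  · push Not at hused
    exact ⟨P.cons ⟨a, w, v, hw, ha, hv⟩ (hw.nodup_map_edge hnd) hused, rfl⟩

end WalkSystem

/-- Menger's theorem, edge version. -/
theorem exists_walkSystem {S T : Set V} (m : ℕ)
    (hcut : ∀ X : Set V, S ⊆ X → X ⊆ T → m ≤ (G.edgeCut X).ncard) :
    ∃ P : G.WalkSystem S T, P.walks.length = m := by
  induction m with
  | zero => exact ⟨⟨[], by simp⟩, rfl⟩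
  | succ m ih =>
    obtain ⟨P, rfl⟩ := ih fun X h₁ h₂ => (Nat.le_succ _).trans (hcut X h₁ h₂)
    by_cases hreach : P.reach ⊆ T
    · have := hcut _ WalkSystem.subset_reach hreach
      have := P.ncard_edgeCut_reach_le
      omega
    · obtain ⟨v, ⟨a, ha, w, hw, hres⟩, hv⟩ := Set.not_subset.1 hreach
      obtain ⟨w', hsub, hw', hnd⟩ := hw.exists_sublist_nodup_verts
      exact WalkSystem.exists_length_eq_succ hw' ha hv hnd (hres.sublist hsub)

def IsFan (G : Multigraph V E) (S : Set V) (n : ℕ) (F : G.edgeCut S → List (Step V E)) : Prop :=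
  (∀ e, (F e)[0]?.map Prod.fst = some e.1 ∧
    ∃ x ∈ S, ∃ b, G.IsWalk x (F e) b ∧ (verts x (F e)).Nodup ∧ n < (F e).length) ∧
  Pairwise fun e f => ((F e).map Prod.fst).Disjoint ((F f).map Prod.fst)

/-- Menger's theorem gives `|δ(S)|` edge-disjoint walks out of the `n`-ball; their tails from a
crossing of `δ(S)` start with distinct edges of `δ(S)`, hence with all of them. -/
theorem exists_isFan (hlf : G.LocallyFinite) {S : Set V} (hS : S.Finite)
    (hmin : ∀ X, S ⊆ X → X.Finite → (G.edgeCut S).ncard ≤ (G.edgeCut X).ncard) (n : ℕ) :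
    ∃ F, G.IsFan S n F := by
  rcases isEmpty_or_nonempty E with hE | hE
  · exact ⟨fun _ => [], fun e => isEmptyElim e.1, fun e => isEmptyElim e.1⟩
  obtain ⟨P, hlen⟩ := exists_walkSystem (T := G.ball S n) (G.edgeCut S).ncard
    fun X hSX hX => hmin X hSX ((ball_finite hlf hS n).subset hX)
  choose! π ε hsub hcut hhead hpath using fun (W : G.EscapeWalk S _) (_ : W ∈ P.walks) =>
    W.isWalk.exists_exit_path W.start_mem W.finish_not_mem
  have hmem : ∀ W ∈ P.walks, ε W ∈ W.steps.map Prod.fst := fun W hW => by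
    obtain ⟨s, hs, hse⟩ := Option.map_eq_some_iff.1 (hhead W hW)
    exact hse ▸ List.mem_map_of_mem ((hsub W hW).subset (List.mem_of_getElem? hs))
  have hnd : (P.walks.map ε).Nodup :=
    List.nodup_map_of_nodup_flatMap (by simpa [List.map_flatMap] using P.nodup) hmem
  have hcover : (↑(P.walks.map ε).toFinset : Set E) = G.edgeCut S :=
    Set.eq_of_subset_of_ncard_le (fun e he => by
        obtain ⟨W, hW, rfl⟩ := List.mem_map.1 (List.mem_toFinset.1 he)
        exact hcut W hW)
      (by rw [Set.ncard_coe_finset, List.toFinset_card_of_nodup hnd, List.length_map, hlen])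
      (edgeCut_finite hlf hS)
  have hsrc : ∀ e : G.edgeCut S, ∃ W ∈ P.walks, ε W = e := fun e => by
    have he : (e : E) ∈ (↑(P.walks.map ε).toFinset : Set E) := by rw [hcover]; exact e.2
    simpa using he
  choose W hW hWε using hsrc
  refine ⟨fun e => π (W e), fun e => ⟨hWε e ▸ hhead _ (hW e), ?_⟩, fun e f hef => ?_⟩
  · obtain ⟨x, hx, hpath⟩ := hpath _ (hW e)
    exact ⟨x, hx, _, hpath⟩
  · have hne : W e ≠ W f := fun h => hef (Subtype.ext (by rw [← hWε e, ← hWε f, h]))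
    exact List.disjoint_of_subset_left ((hsub _ (hW e)).map _).subset
      (List.disjoint_of_subset_right ((hsub _ (hW f)).map _).subset
        (WalkSystem.disjoint_of_ne (hW e) (hW f) hne))

theorem exists_eventually_getElem?_eq (hlf : G.LocallyFinite) {S : Set V} (hS : S.Finite)
    (U : Ultrafilter ℕ) {F : ℕ → List (Step V E)} (i : ℕ)
    (hF : ∀ n, ∃ x ∈ S, ∃ b, G.IsWalk x (F n) b)
    (hlong : ∀ᶠ n in (U : Filter ℕ), i < (F n).length) :
    ∃ s, ∀ᶠ n in (U : Filter ℕ), (F n)[i]? = some s := by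
  obtain ⟨o, ho⟩ := U.exists_eventually_eq (f := fun n => (F n)[i]?)
    ((finite_setOf_isWalk hlf (i + 1) hS).image fun l => l[i]?) (Eventually.of_forall fun n => by
      obtain ⟨x, hx, b, hw⟩ := hF n
      obtain ⟨c, hc⟩ := hw.take (i + 1)
      exact ⟨(F n).take (i + 1), ⟨by simp, x, hx, c, hc⟩, by simp⟩)
  obtain ⟨n, hn, hlt⟩ := (ho.and hlong).exists
  exact ⟨_, ho.mono fun m hm => hm.trans (hn.symm.trans (List.getElem?_eq_getElem hlt))⟩

def Ray.ofSteps (s : ℕ → Step V E) (hinc : ∀ i, G.Inc (s i).1 (s i).2.1 (s i).2.2)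
    (hchain : ∀ i, (s (i + 1)).2.1 = (s i).2.2) (hinj : Function.Injective fun i => (s i).2.1) :
    G.Ray where
  vert i := (s i).2.1
  edge i := (s i).1
  inc i := hchain i ▸ hinc i
  inj := hinj

theorem exists_rays_of_isFan (hlf : G.LocallyFinite) {S : Set V} (hS : S.Finite)
    (hF : ∀ n, ∃ F, G.IsFan S n F) :
    ∃ R : G.edgeCut S → G.Ray, (∀ e, (R e).edge 0 = e) ∧
      Pairwise fun e f => (R e).EdgeDisjoint (R f) := by
  choose F hF using hF
  let U : Ultrafilter ℕ := .of atTop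
  have hlong : ∀ e i, ∀ᶠ n in (U : Filter ℕ), i < (F n e).length := fun e i =>
    Ultrafilter.of_le atTop ((eventually_ge_atTop i).mono fun n hn => by
      obtain ⟨_, _, _, _, _, hlen⟩ := ((hF n).1 e).2
      omega)
  have hlim : ∀ e i, ∃ s, ∀ᶠ n in (U : Filter ℕ), (F n e)[i]? = some s := fun e i =>
    exists_eventually_getElem?_eq hlf hS U i
      (fun n => by obtain ⟨x, hx, b, hw, -⟩ := ((hF n).1 e).2; exact ⟨x, hx, b, hw⟩) (hlong e i)
  choose step hstep using hlim
  have hpath : ∀ e n, ∃ x b, G.IsWalk x (F n e) b ∧ (verts x (F n e)).Nodup := fun e n => by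
    obtain ⟨x, -, b, hw, hnd, -⟩ := ((hF n).1 e).2
    exact ⟨x, b, hw, hnd⟩
  have hray : ∀ e, ∃ R : G.Ray, ∀ i, R.edge i = (step e i).1 := fun e => by
    refine ⟨Ray.ofSteps (step e) (fun i => ?_) (fun i => ?_) (fun i j hij => ?_), fun i => rfl⟩
    · obtain ⟨n, hn⟩ := (hstep e i).exists
      obtain ⟨x, b, hw, -⟩ := hpath e n
      exact hw.inc_of_mem (List.mem_of_getElem? hn)
    · obtain ⟨n, hi, hi'⟩ := ((hstep e i).and (hstep e (i + 1))).exists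
      obtain ⟨x, b, hw, -⟩ := hpath e n
      exact hw.src_eq_of_getElem? hi hi'
    · obtain ⟨n, hi, hj⟩ := ((hstep e i).and (hstep e j)).exists
      obtain ⟨x, b, hw, hnd⟩ := hpath e n
      exact hw.eq_of_getElem?_src_eq hnd hi hj hij
  choose R hR using hray
  refine ⟨R, fun e => ?_, fun e f hef i j hij => ?_⟩
  · obtain ⟨n, hn⟩ := (hstep e 0).exists
    simpa [hR, hn] using ((hF n).1 e).1
  · obtain ⟨n, hi, hj⟩ := ((hstep e i).and (hstep f j)).exists
    rw [hR, hR] at hij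
    exact (hF n).2 hef (List.mem_map_of_mem (List.mem_of_getElem? hi))
      (hij ▸ List.mem_map_of_mem (List.mem_of_getElem? hj))

theorem exists_superset_ncard_edgeCut_le (A : Set V) (hA : A.Finite) :
    ∃ S, A ⊆ S ∧ S.Finite ∧
      ∀ X, S ⊆ X → X.Finite → (G.edgeCut S).ncard ≤ (G.edgeCut X).ncard := by
  have hex : ∃ m, ∃ X, A ⊆ X ∧ X.Finite ∧ (G.edgeCut X).ncard = m := ⟨_, A, subset_rfl, hA, rfl⟩
  obtain ⟨S, hAS, hS, hm⟩ := Nat.find_spec hex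
  exact ⟨S, hAS, hS, fun X hSX hX => hm ▸ Nat.find_min' hex ⟨X, hAS.trans hSX, hX, rfl⟩⟩

theorem EdgeConnected.edgeCut_nonempty {k : ℕ} (hconn : G.EdgeConnected k) (hk : 0 < k)
    {X : Set V} {x y : V} (hx : x ∈ X) (hy : y ∉ X) : (G.edgeCut X).Nonempty := by
  obtain ⟨P, -, -⟩ := hconn x y (ne_of_mem_of_not_mem hx hy)
  obtain ⟨l, hl⟩ := (P ⟨0, hk⟩).exists_isWalk
  obtain ⟨C, e, x', y', D, rfl, hx', hy'⟩ := hl.exists_crossing hx hy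
  exact ⟨e, hl.of_append_cons.2.1.mem_edgeCut_iff.2 (Or.inl ⟨hx', hy'⟩)⟩

end Multigraph

/-- Let `k` be a positive integer, `G` an infinite, locally finite,
`k`-edge-connected graph and `A` a finite set of vertices. Then there is a finite set
`S ⊇ A` of vertices and a collection of pairwise edge-disjoint rays, one for each edge of
`δ(S)`, such that each edge of `δ(S)` is the first edge of the corresponding ray.
Moreover, if `G` is 1-ended, all these rays belong to the unique end of `G`. -/
theorem exists_cut_with_rays {V : Type u} {E : Type v} (G : Multigraph V E) (k : ℕ)
    (hk : 0 < k) (hinf : Infinite V) (hlf : G.LocallyFinite)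
    (hconn : G.EdgeConnected k) (A : Set V) (hA : A.Finite) :
    ∃ S : Set V, A ⊆ S ∧ S.Finite ∧
      ∃ R : E → G.Ray,
        (∀ e ∈ G.edgeCut S, (R e).edge 0 = e) ∧
        (∀ e ∈ G.edgeCut S, ∀ f ∈ G.edgeCut S, e ≠ f → (R e).EdgeDisjoint (R f)) ∧
        (G.OneEnded → ∀ e ∈ G.edgeCut S, ∀ Q : G.Ray, G.RayEquiv (R e) Q) := by
  classical
  obtain ⟨x⟩ := Infinite.nonempty V
  obtain ⟨S, hAS, hS, hmin⟩ := G.exists_superset_ncard_edgeCut_le _ (hA.insert x)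
  obtain ⟨y, hy⟩ := hS.infinite_compl.nonempty
  obtain ⟨e₀, he₀⟩ := hconn.edgeCut_nonempty hk (hAS (Set.mem_insert x A)) hy
  obtain ⟨R, hR₀, hRdisj⟩ :=
    Multigraph.exists_rays_of_isFan hlf hS (Multigraph.exists_isFan hlf hS hmin)
  let R' : E → G.Ray := fun e => if h : e ∈ G.edgeCut S then R ⟨e, h⟩ else R ⟨e₀, he₀⟩
  refine ⟨S, (Set.subset_insert x A).trans hAS, hS, R', fun e he => ?_,
    fun e he f hf hef => ?_, fun hG _ _ Q => hG.2 _ Q⟩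
  · simpa [R', he] using hR₀ ⟨e, he⟩
  · simpa [R', he, hf] using @hRdisj ⟨e, he⟩ ⟨f, hf⟩ (Subtype.coe_ne_coe.1 hef)
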